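/- arXiv:2203.02386 — 9 statements merged into one kernel-verified Lean document; each statement's English description precedes it below -/
import Mathlib

section
/- Let Λ ∈ (0,1) and let ρ be a d×d complex Hermitian positive semidefinite matrix with trace 1 such that every eigenvalue of ρ is either 0 or at least Λ. Then for every positive integer K, |(−∑_j λ_j ln λ_j) − ∑_{k=1}^{K} (1/k) · tr(ρ(I−ρ)^k)| ≤ (1−Λ)^{K+1} / (Λ(K+1)), where λ_1,…,λ_d are the (real) eigenvalues of ρ and the summand λ ln λ is interpreted as 0 when λ = 0. -/
/-!
For `0 < λ ≤ 1` the Mercator series gives `-λ ln λ = ∑_{k ≥ 1} λ (1 - λ)^k / k`, while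
`tr(ρ (I - ρ)^k) = ∑_j λ_j (1 - λ_j)^k`, so the error is a sum over the eigenvalues of tails of
this series. Comparing with a geometric series, the tail for `λ` is at most
`λ (1 - λ)^(K+1) / ((K + 1) λ) ≤ λ (1 - Λ)^(K+1) / (Λ (K + 1))` when `λ ≥ Λ`, and the weights `λ_j`
sum to `1`.
-/

open Matrix ComplexOrder Finset

namespace Real

theorem abs_neg_log_one_sub_sub_sum_le {x : ℝ} (hx0 : 0 ≤ x) (hx1 : x < 1) (K : ℕ) :
    |-log (1 - x) - ∑ k ∈ Icc 1 K, x ^ k / k| ≤ x ^ (K + 1) / ((K + 1) * (1 - x)) := by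
  have htail := (hasSum_nat_add_iff' K).2 <|
    hasSum_pow_div_log_of_abs_lt_one (abs_lt.2 ⟨by linarith, hx1⟩)
  have hpartial : ∑ k ∈ Icc 1 K, x ^ k / k = ∑ i ∈ range K, x ^ (i + 1) / (i + 1) := by
    rw [← Ico_add_one_right_eq_Icc, sum_Ico_eq_sum_range, Nat.add_sub_cancel]
    simp [add_comm]
  set c := x ^ (K + 1) / (K + 1)
  have hgeom := (hasSum_geometric_of_lt_one hx0 hx1).mul_left c
  have hterm (n : ℕ) : x ^ (n + K + 1) / ((n + K : ℕ) + 1) ≤ c * x ^ n := by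
    calc x ^ (n + K + 1) / ((n + K : ℕ) + 1) ≤ x ^ (n + K + 1) / (K + 1) := by
          gcongr; linarith [n.cast_nonneg (α := ℝ)]
      _ = c * x ^ n := by ring
  rw [hpartial, abs_of_nonneg (htail.nonneg fun n ↦ by positivity)]
  calc _ ≤ c * (1 - x)⁻¹ := hasSum_le hterm htail hgeom
    _ = _ := by rw [div_mul_eq_div_div, div_eq_mul_inv]

theorem abs_negMulLog_sub_mul_sum_le {Λ t : ℝ} (hΛ : 0 < Λ) (ht : t = 0 ∨ Λ ≤ t) (ht1 : t ≤ 1)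
    (K : ℕ) :
    |negMulLog t - t * ∑ k ∈ Icc 1 K, (1 - t) ^ k / k| ≤
      t * ((1 - Λ) ^ (K + 1) / (Λ * (K + 1))) := by
  rcases ht with rfl | hΛt
  · simp
  have ht0 : 0 < t := hΛ.trans_le hΛt
  have hseries := abs_neg_log_one_sub_sub_sum_le (x := 1 - t) (by linarith) (by linarith) K
  rw [sub_sub_cancel] at hseries
  calc |negMulLog t - t * ∑ k ∈ Icc 1 K, (1 - t) ^ k / k|
      = |t * (-log t - ∑ k ∈ Icc 1 K, (1 - t) ^ k / k)| := by rw [negMulLog]; congr 1; ring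
    _ = t * |-log t - ∑ k ∈ Icc 1 K, (1 - t) ^ k / k| := by rw [abs_mul, abs_of_pos ht0]
    _ ≤ t * ((1 - t) ^ (K + 1) / ((K + 1) * t)) := by gcongr
    _ = (1 - t) ^ (K + 1) / (K + 1) := by field_simp
    _ ≤ (1 - Λ) ^ (K + 1) / (K + 1) := by gcongr
    _ = Λ * ((1 - Λ) ^ (K + 1) / (Λ * (K + 1))) := by field_simp
    _ ≤ t * ((1 - Λ) ^ (K + 1) / (Λ * (K + 1))) := by
        gcongr
        exact div_nonneg (pow_nonneg (by linarith) _) (by positivity)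

end Real

namespace Matrix.IsHermitian

variable {n 𝕜 : Type*} [RCLike 𝕜] [Fintype n] [DecidableEq n] {A : Matrix n n 𝕜}

theorem trace_cfc (hA : A.IsHermitian) (f : ℝ → ℝ) :
    (cfc f A).trace = ∑ i, (f (hA.eigenvalues i) : 𝕜) := by
  rw [hA.cfc_eq, IsHermitian.cfc, Unitary.conjStarAlgAut_apply, trace_mul_cycle,
    Unitary.coe_star_mul_self, Matrix.one_mul, trace_diagonal]
  rfl

theorem mul_one_sub_pow_eq_cfc (hA : A.IsHermitian) (k : ℕ) :
    A * (1 - A) ^ k = cfc (fun x : ℝ ↦ x * (1 - x) ^ k) A := by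
  have hid : cfc (fun x : ℝ ↦ x) A = A := cfc_id' ℝ A hA
  rw [cfc_mul .., cfc_pow .., cfc_sub (fun _ : ℝ ↦ 1) (fun x : ℝ ↦ x) A, cfc_const_one ℝ A, hid]

theorem re_trace_mul_one_sub_pow (hA : A.IsHermitian) (k : ℕ) :
    RCLike.re (A * (1 - A) ^ k).trace = ∑ i, hA.eigenvalues i * (1 - hA.eigenvalues i) ^ k := by
  simp only [hA.mul_one_sub_pow_eq_cfc, hA.trace_cfc, map_sum, RCLike.ofReal_re]

end Matrix.IsHermitian

/-- `Real.log 0 = 0` in Mathlib, matching the convention `0 · ln 0 = 0`. -/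
theorem stmt_0_general (d : ℕ) (Λ : ℝ) (hΛ : Λ ∈ Set.Ioo (0 : ℝ) 1)
    (ρ : Matrix (Fin d) (Fin d) ℂ) (hρ : ρ.PosSemidef) (htr : ρ.trace = 1)
    (heig : ∀ j, hρ.1.eigenvalues j = 0 ∨ Λ ≤ hρ.1.eigenvalues j)
    (K : ℕ) :
    |(-∑ j, hρ.1.eigenvalues j * Real.log (hρ.1.eigenvalues j)) -
        ∑ k ∈ Finset.Icc 1 K, (1 / (k : ℝ)) * ((ρ * (1 - ρ) ^ k).trace).re|
      ≤ (1 - Λ) ^ (K + 1) / (Λ * (K + 1)) := by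
  set μ := hρ.1.eigenvalues
  have hμ_sum : ∑ j, μ j = 1 := RCLike.ofReal_inj (K := ℂ) |>.1 <| by
    rw [RCLike.ofReal_sum, RCLike.ofReal_one, ← htr, hρ.1.trace_eq_sum_eigenvalues]
  have hμ_le_one (j : Fin d) : μ j ≤ 1 :=
    hμ_sum ▸ single_le_sum (fun i _ ↦ hρ.eigenvalues_nonneg i) (mem_univ j)
  have hsplit : (-∑ j, μ j * Real.log (μ j)) -
        ∑ k ∈ Icc 1 K, (1 / (k : ℝ)) * ((ρ * (1 - ρ) ^ k).trace).re =
      ∑ j, (Real.negMulLog (μ j) - μ j * ∑ k ∈ Icc 1 K, (1 - μ j) ^ k / k) := by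
    simp only [← RCLike.re_to_complex, hρ.1.re_trace_mul_one_sub_pow, mul_sum, sum_sub_distrib,
      Real.negMulLog, neg_mul, sum_neg_distrib]
    rw [sum_comm]
    congr! 3
    ring
  calc _ = |∑ j, (Real.negMulLog (μ j) - μ j * ∑ k ∈ Icc 1 K, (1 - μ j) ^ k / k)| := by
        rw [hsplit]
    _ ≤ ∑ j, μ j * ((1 - Λ) ^ (K + 1) / (Λ * (K + 1))) :=
        (abs_sum_le_sum_abs _ _).trans <| sum_le_sum fun j _ ↦
          Real.abs_negMulLog_sub_mul_sum_le hΛ.1 (heig j) (hμ_le_one j) K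
    _ = (1 - Λ) ^ (K + 1) / (Λ * (K + 1)) := by rw [← sum_mul, hμ_sum, one_mul]

/-- truncated Taylor series approximation of the von Neumann entropy.
`Real.log 0 = 0` in Mathlib, matching the convention `0 · ln 0 = 0`. -/
theorem stmt_0 (d : ℕ) (Λ : ℝ) (hΛ : Λ ∈ Set.Ioo (0 : ℝ) 1)
    (ρ : Matrix (Fin d) (Fin d) ℂ) (hρ : ρ.PosSemidef) (htr : ρ.trace = 1)
    (heig : ∀ j, hρ.1.eigenvalues j = 0 ∨ Λ ≤ hρ.1.eigenvalues j)
    (K : ℕ) (hK : 1 ≤ K) :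
    |(-∑ j, hρ.1.eigenvalues j * Real.log (hρ.1.eigenvalues j)) -
        ∑ k ∈ Finset.Icc 1 K, (1 / (k : ℝ)) * ((ρ * (1 - ρ) ^ k).trace).re|
      ≤ (1 - Λ) ^ (K + 1) / (Λ * (K + 1)) :=
  stmt_0_general d Λ hΛ ρ hρ htr heig K
end

section
/- For every real β ∈ (0,1] and every integer k ≥ 2, the generalized binomial coefficient satisfies |C(β,k)| ≤ (1 + (β·ln((k+1)/k²) + β − 1)/k)^k. -/
/-! Pairing the factor `β` of `C(β,k)` with `1/k` rather than with `1` writes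
`|C(β,k)| = (β/k) ∏_{j=1}^{k-1} (1 - β/j)` as a product of `k` numbers in `[0,1]`. By AM-GM it is at
most the `k`-th power of their mean `(β/k + k - 1 - β H_{k-1})/k`, and `H_{k-1} ≥ ln k` together
with `β/k ≤ β ≤ β (1 + ln((k+1)/k))` bounds that mean by `1 + (β ln((k+1)/k²) + β - 1)/k`. -/

/-- The generalized binomial coefficient `C(β,k) = β(β−1)⋯(β−k+1)/k!`. -/
noncomputable def genBinom (β : ℝ) (k : ℕ) : ℝ :=
  (∏ j ∈ Finset.range k, (β - j)) / (k.factorial : ℝ)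

open Finset Real

theorem prod_le_arith_mean_pow {ι : Type*} (s : Finset ι) {z : ι → ℝ} (hz : ∀ i ∈ s, 0 ≤ z i) :
    ∏ i ∈ s, z i ≤ ((∑ i ∈ s, z i) / #s) ^ #s := by
  rcases s.eq_empty_or_nonempty with rfl | hs
  · simp
  have hcard : (0 : ℝ) < #s := by exact_mod_cast hs.card_pos
  have hgm := geom_mean_le_arith_mean s (fun _ ↦ 1) z (by simp) (by simpa using hcard) hz
  simp only [rpow_one, one_mul, sum_const, nsmul_eq_mul, mul_one] at hgm
  calc ∏ i ∈ s, z i = ((∏ i ∈ s, z i) ^ ((#s : ℝ)⁻¹)) ^ #s :=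
        (rpow_inv_natCast_pow (prod_nonneg hz) hs.card_pos.ne').symm
    _ ≤ _ := pow_le_pow_left₀ (rpow_nonneg (prod_nonneg hz) _) hgm _

theorem genBinom_succ (β : ℝ) (m : ℕ) :
    genBinom β (m + 1) = (-1) ^ m * (β / (m + 1) * ∏ j ∈ range m, (1 - β / (j + 1))) := by
  have hfactor : ∏ j ∈ range m, (β - (j + 1)) / (j + 1)
      = (-1) ^ m * ∏ j ∈ range m, (1 - β / (j + 1)) := by
    have hneg := prod_neg (s := range m) fun j : ℕ ↦ 1 - β / (j + 1)
    rw [card_range] at hneg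
    rw [← hneg]
    refine prod_congr rfl fun j _ ↦ ?_
    field_simp
    ring
  rw [genBinom, prod_range_succ', Nat.factorial_succ, ← prod_range_add_one_eq_factorial]
  push_cast
  rw [mul_left_comm, ← hfactor, prod_div_distrib, sub_zero, mul_comm _ β, mul_div_mul_comm]

noncomputable def binomFactor (β : ℝ) (k : ℕ) : ℕ → ℝ
  | 0 => β / k
  | j + 1 => 1 - β / (j + 1)

theorem binomFactor_nonneg {β : ℝ} (hβ0 : 0 ≤ β) (hβ1 : β ≤ 1) (k j : ℕ) :
    0 ≤ binomFactor β k j := by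
  cases j with
  | zero => exact div_nonneg hβ0 k.cast_nonneg
  | succ j =>
    have hj : (1 : ℝ) ≤ j + 1 := le_add_of_nonneg_left j.cast_nonneg
    exact sub_nonneg.2 (div_le_one_of_le₀ (hβ1.trans hj) (by positivity))

theorem abs_genBinom_eq_prod_binomFactor {β : ℝ} (hβ0 : 0 ≤ β) (hβ1 : β ≤ 1) (k : ℕ) :
    |genBinom β k| = ∏ j ∈ range k, binomFactor β k j := by
  cases k with
  | zero => simp [genBinom]
  | succ m =>
    have hprod : ∏ j ∈ range (m + 1), binomFactor β (m + 1) j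
        = β / (m + 1) * ∏ j ∈ range m, (1 - β / (j + 1)) := by
      simp [prod_range_succ', binomFactor, mul_comm]
    rw [genBinom_succ, ← hprod, abs_mul, abs_pow, abs_neg, abs_one, one_pow, one_mul,
      abs_of_nonneg (prod_nonneg fun j _ ↦ binomFactor_nonneg hβ0 hβ1 (m + 1) j)]

theorem sum_binomFactor (β : ℝ) (m : ℕ) :
    ∑ j ∈ range (m + 1), binomFactor β (m + 1) j = β / (m + 1) + m - β * harmonic m := by
  simp only [sum_range_succ', binomFactor, sum_sub_distrib, div_eq_mul_inv, ← mul_sum, harmonic]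
  push_cast
  simp only [sum_const, card_range, nsmul_eq_mul, mul_one]
  ring

theorem mean_binomFactor_le {β : ℝ} (hβ : 0 ≤ β) {k : ℕ} (hk : 0 < k) :
    (∑ j ∈ range k, binomFactor β k j) / k ≤ 1 + (β * log ((k + 1) / k ^ 2) + β - 1) / k := by
  obtain ⟨m, rfl⟩ := Nat.exists_eq_add_one_of_ne_zero hk.ne'
  have hH : β * log (m + 1) ≤ β * harmonic m := by
    gcongr
    exact_mod_cast log_add_one_le_harmonic m
  have hlog : log ((m + 1 + 1) / (m + 1) ^ 2) = log (m + 1 + 1) - 2 * log (m + 1) := by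
    rw [log_div (by positivity) (by positivity), log_pow]
    push_cast
    ring
  have hmono : β * log (m + 1) ≤ β * log (m + 1 + 1) := by
    gcongr
    linarith
  have hβk : β / (m + 1) ≤ β := div_le_self hβ (by linarith [(m.cast_nonneg : (0 : ℝ) ≤ m)])
  rw [sum_binomFactor]
  push_cast
  rw [hlog, div_le_iff₀ (by positivity), add_mul, div_mul_cancel₀ _ (by positivity)]
  linarith

theorem stmt_3_general (β : ℝ) (hβ : β ∈ Set.Ioc (0 : ℝ) 1) (k : ℕ) :
    |genBinom β k| ≤
      (1 + (β * Real.log (((k : ℝ) + 1) / (k : ℝ) ^ 2) + β - 1) / (k : ℝ)) ^ k := by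
  obtain ⟨hβ0, hβ1⟩ := hβ
  rcases k.eq_zero_or_pos with rfl | hk
  · simp [genBinom]
  have hnonneg : ∀ j ∈ range k, 0 ≤ binomFactor β k j :=
    fun j _ ↦ binomFactor_nonneg hβ0.le hβ1 k j
  calc |genBinom β k| = ∏ j ∈ range k, binomFactor β k j :=
        abs_genBinom_eq_prod_binomFactor hβ0.le hβ1 k
    _ ≤ ((∑ j ∈ range k, binomFactor β k j) / k) ^ k := by
        simpa only [card_range] using prod_le_arith_mean_pow (range k) hnonneg
    _ ≤ _ := pow_le_pow_left₀ (div_nonneg (sum_nonneg hnonneg) k.cast_nonneg)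
        (mean_binomFactor_le hβ0.le hk) k

/-- for `β ∈ (0,1]` and `k ≥ 2`,
`|C(β,k)| ≤ (1 + (β·ln((k+1)/k²) + β − 1)/k)^k`. -/
theorem stmt_3 (β : ℝ) (hβ : β ∈ Set.Ioc (0 : ℝ) 1) (k : ℕ) (hk : 2 ≤ k) :
    |genBinom β k| ≤
      (1 + (β * Real.log (((k : ℝ) + 1) / (k : ℝ) ^ 2) + β - 1) / (k : ℝ)) ^ k :=
  stmt_3_general β hβ k
end

section
/- For every real β ∈ (0,1] and every integer k ≥ 4, the generalized binomial coefficient satisfies |C(β,k)| ≤ 1/e, where e is Euler's number. -/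
/-- for `β ∈ (0,1]` and `k ≥ 4`, `|C(β,k)| ≤ 1/e`. -/
theorem stmt_4 (β : ℝ) (hβ : β ∈ Set.Ioc (0 : ℝ) 1) (k : ℕ) (hk : 4 ≤ k) :
    |genBinom β k| ≤ 1 / Real.exp 1 := by
  obtain ⟨hβ0, hβ1⟩ := hβ
  obtain ⟨n, rfl⟩ : ∃ n, k = n + 1 := ⟨k - 1, by omega⟩
  have hprod : |∏ j ∈ Finset.range (n + 1), (β - j)| ≤ (n.factorial : ℝ) := by
    rw [Finset.abs_prod, Finset.prod_range_succ']
    have h2 : ∏ j ∈ Finset.range n, |β - (↑(j + 1) : ℝ)| ≤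
        ∏ j ∈ Finset.range n, ((j : ℝ) + 1) := by
      apply Finset.prod_le_prod (fun i _ => abs_nonneg _)
      intro i _
      rw [abs_le]
      push_cast
      constructor <;> nlinarith [Nat.cast_nonneg (α := ℝ) i]
    have hβabs : |β - (0 : ℕ)| ≤ 1 := by
      simp only [Nat.cast_zero, sub_zero]
      rw [abs_le]; constructor <;> linarith
    calc (∏ j ∈ Finset.range n, |β - (↑(j + 1) : ℝ)|) * |β - (0 : ℕ)|
        ≤ (∏ j ∈ Finset.range n, ((j : ℝ) + 1)) * 1 :=
          mul_le_mul h2 hβabs (abs_nonneg _)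
            (Finset.prod_nonneg fun i _ => by positivity)
      _ = (n.factorial : ℝ) := by
          rw [mul_one]
          norm_cast
          exact Finset.prod_range_add_one_eq_factorial n
  have hfact : ((n + 1).factorial : ℝ) = (n + 1) * n.factorial := by
    rw [Nat.factorial_succ]; push_cast; ring
  have hfpos : (0 : ℝ) < ((n + 1).factorial : ℝ) := by positivity
  have h3 : |genBinom β (n + 1)| ≤ 1 / (n + 1 : ℝ) := by
    rw [genBinom, abs_div, abs_of_pos hfpos, div_le_div_iff₀ hfpos (by positivity)]
    calc |∏ j ∈ Finset.range (n + 1), (β - j)| * (n + 1 : ℝ)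
        ≤ (n.factorial : ℝ) * (n + 1 : ℝ) :=
          mul_le_mul_of_nonneg_right hprod (by positivity)
      _ = 1 * ((n + 1).factorial : ℝ) := by rw [hfact]; ring
  refine h3.trans ?_
  have he : Real.exp 1 ≤ 4 := by
    have := Real.exp_one_lt_d9
    linarith
  have hn : (4 : ℝ) ≤ (n + 1 : ℝ) := by
    have : (4 : ℕ) ≤ n + 1 := hk
    exact_mod_cast this
  have hepos := Real.exp_pos 1
  apply div_le_div_of_nonneg_left (by norm_num) hepos
  linarith
end

section
/- For every real β > 1 and every integer k with k ≥ e^{2/β}·(β+1)², the generalized binomial coefficient satisfies |C(β,k)| ≤ 1. -/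
open Finset Nat

theorem abs_genBinom (β : ℝ) (k : ℕ) :
    |genBinom β k| = (∏ j ∈ range k, |β - j|) / k ! := by
  rw [genBinom, abs_div, abs_prod, Nat.abs_cast]

theorem prod_range_abs_sub_le_pow {β c : ℝ} {n : ℕ} (hβ : (n : ℝ) - 1 ≤ β) (hc : β ≤ c) :
    ∏ j ∈ range n, |β - j| ≤ c ^ n := by
  refine (prod_le_prod (g := fun _ => c) (fun _ _ => abs_nonneg _) fun j hj => ?_).trans_eq
    (by rw [prod_const, card_range])
  have hj : (j : ℝ) + 1 ≤ n := by exact_mod_cast mem_range.mp hj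
  rw [abs_of_nonneg (by linarith)]
  linarith [j.cast_nonneg (α := ℝ)]

theorem prod_range_abs_sub_add_le_factorial {β : ℝ} {n : ℕ} (hβ₁ : (n : ℝ) - 1 ≤ β)
    (hβ₂ : β ≤ n) (d : ℕ) : ∏ i ∈ range d, |β - ↑(n + i)| ≤ d ! := by
  rw [← prod_range_add_one_eq_factorial, Nat.cast_prod]
  gcongr with i
  rw [abs_sub_comm, abs_of_nonneg (by push_cast; linarith)]
  push_cast
  linarith

theorem abs_genBinom_le_one {β : ℝ} {n k : ℕ} (hβ₁ : (n : ℝ) - 1 ≤ β) (hβ₂ : β ≤ n)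
    (hnk : n ≤ k) (hk : β + n ≤ k + 1) : |genBinom β k| ≤ 1 := by
  obtain ⟨d, rfl⟩ := Nat.exists_eq_add_of_le hnk
  have hdesc : (d + 1) ^ n ≤ (n + d).descFactorial n := by
    have := Nat.pow_sub_le_descFactorial (n + d) n
    rwa [show n + d + 1 - n = d + 1 by omega] at this
  have hc : β ≤ d + 1 := by
    push_cast at hk
    linarith
  rw [abs_genBinom, div_le_one (by positivity), prod_range_add,
    ← Nat.factorial_mul_descFactorial (Nat.le_add_right n d), Nat.add_sub_cancel_left,
    Nat.cast_mul, mul_comm (d ! : ℝ)]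
  gcongr
  · exact (prod_range_abs_sub_le_pow hβ₁ hc).trans (by exact_mod_cast hdesc)
  · exact prod_range_abs_sub_add_le_factorial hβ₁ hβ₂ d

/-- for `β > 1` and `k ≥ e^{2/β}·(β+1)²`, `|C(β,k)| ≤ 1`. -/
theorem stmt_6 (β : ℝ) (hβ : 1 < β) (k : ℕ)
    (hk : Real.exp (2 / β) * (β + 1) ^ 2 ≤ (k : ℝ)) :
    |genBinom β k| ≤ 1 := by
  have hceil : (⌈β⌉₊ : ℝ) < β + 1 := Nat.ceil_lt_add_one (by linarith)
  have hk' : 2 * β + 1 ≤ k := by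
    have : (β + 1) ^ 2 ≤ Real.exp (2 / β) * (β + 1) ^ 2 :=
      le_mul_of_one_le_left (by positivity) (Real.one_le_exp (by positivity))
    nlinarith
  refine abs_genBinom_le_one (by linarith) (Nat.le_ceil β) ?_ (by linarith)
  exact_mod_cast (show (⌈β⌉₊ : ℝ) ≤ k by linarith)
end

section
/- Let Λ ∈ (0,1), let α > 0 with α ≠ 1, and set β = α − 1. Let ρ be a d×d complex Hermitian positive semidefinite matrix with trace 1 whose eigenvalues λ_1,…,λ_d each satisfy λ_j = 0 or λ_j ≥ Λ. Let K be a positive integer such that |C(β,k)| ≤ 1 for every integer k > K. Then |∑_j λ_j^α − 1 − ∑_{k=1}^{K} C(β,k)·tr(ρ(ρ−I)^k)| ≤ (1−Λ)^{K+1}/Λ, where λ^α denotes the real power with the convention 0^α = 0. -/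
/-!
Diagonalising `ρ` gives `tr (ρ (ρ - 1)ᵏ) = ∑ⱼ λⱼ (λⱼ - 1)ᵏ`, and since `∑ⱼ λⱼ = 1` the error equals
`∑ⱼ λⱼ (λⱼ ^ β - ∑_{k ≤ K} C(β,k) (λⱼ - 1)ᵏ)`; the terms with `λⱼ = 0` vanish. For `λⱼ ≥ Λ` the
bracket is the tail of the binomial series of `(1 + (λⱼ - 1)) ^ β`, whose terms are at most
`(1 - λⱼ)ᵏ` in absolute value because `|C(β,k)| ≤ 1` for `k > K`, so it is bounded by the
geometric tail `(1 - λⱼ) ^ (K + 1) / λⱼ ≤ (1 - Λ) ^ (K + 1) / Λ`.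
-/

open Matrix ComplexOrder

open Finset

open Polynomial in
theorem Matrix.IsHermitian.trace_aeval {𝕜 n : Type*} [RCLike 𝕜] [Fintype n] [DecidableEq n]
    {A : Matrix n n 𝕜} (hA : A.IsHermitian) (p : 𝕜[X]) :
    (aeval A p).trace = ∑ i, p.eval (hA.eigenvalues i : 𝕜) := by
  conv_lhs => rw [hA.spectral_theorem]
  rw [aeval_algHom_apply, Unitary.conjStarAlgAut_apply, trace_mul_cycle,
    Unitary.coe_star_mul_self, one_mul, ← diagonalAlgHom_apply (R := 𝕜), aeval_algHom_apply,
    aeval_pi_apply, diagonalAlgHom_apply, trace_diagonal]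
  simp

open RCLike Polynomial in
theorem Matrix.IsHermitian.re_trace_mul_sub_one_pow {𝕜 n : Type*} [RCLike 𝕜] [Fintype n]
    [DecidableEq n] {A : Matrix n n 𝕜} (hA : A.IsHermitian) (k : ℕ) :
    re (A * (A - 1) ^ k).trace = ∑ i, hA.eigenvalues i * (hA.eigenvalues i - 1) ^ k := by
  have hpoly : A * (A - 1) ^ k = aeval A (X * (X - 1) ^ k : 𝕜[X]) := by simp
  rw [hpoly, hA.trace_aeval, map_sum]
  refine sum_congr rfl fun i _ ↦ ?_
  simp only [eval_mul, eval_pow, eval_sub, eval_X, eval_one]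
  norm_cast

open Polynomial in
theorem genBinom_eq_ringChoose (β : ℝ) (k : ℕ) : genBinom β k = Ring.choose β k := by
  rw [Ring.choose_eq_smul, genBinom, ← aeval_eq_smeval, aeval_def, eval₂_eq_eval_map,
    descPochhammer_map, descPochhammer_eval_eq_prod_range, smul_eq_mul, div_eq_inv_mul]

theorem hasSum_genBinom_mul_pow (β : ℝ) {x : ℝ} (hx : |x| < 1) :
    HasSum (fun k ↦ genBinom β k * x ^ k) ((1 + x) ^ β) := by
  have hmem : x ∈ Metric.eball (0 : ℝ) 1 := by
    rw [mem_eball_zero_iff, ← ofReal_norm, Real.norm_eq_abs]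
    exact ENNReal.ofReal_lt_one.mpr hx
  simpa [genBinom_eq_ringChoose, mul_comm, binomialSeries] using
    Real.one_add_rpow_hasFPowerSeriesOnBall_zero.hasSum hmem

theorem abs_one_add_rpow_sub_sum_genBinom_le {β x : ℝ} (hx : |x| < 1) {K : ℕ}
    (hbin : ∀ k, K < k → |genBinom β k| ≤ 1) :
    |(1 + x) ^ β - ∑ k ∈ range (K + 1), genBinom β k * x ^ k| ≤ |x| ^ (K + 1) / (1 - |x|) := by
  have htail := ((hasSum_nat_add_iff' (K + 1)).mpr (hasSum_genBinom_mul_pow β hx)).tsum_eq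
  have hgeom : HasSum (fun k ↦ |x| ^ (k + (K + 1))) (|x| ^ (K + 1) / (1 - |x|)) := by
    simpa [pow_add, mul_comm, div_eq_mul_inv] using
      (hasSum_geometric_of_lt_one (abs_nonneg x) hx).mul_left (|x| ^ (K + 1))
  rw [← htail, ← Real.norm_eq_abs]
  refine tsum_of_norm_bounded hgeom fun k ↦ ?_
  rw [Real.norm_eq_abs, abs_mul, abs_pow]
  exact mul_le_of_le_one_left (by positivity) (hbin _ (by omega))

theorem abs_rpow_sub_sum_genBinom_le {β t : ℝ} (ht0 : 0 < t) (ht1 : t ≤ 1) {K : ℕ}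
    (hbin : ∀ k, K < k → |genBinom β k| ≤ 1) :
    |t ^ β - ∑ k ∈ range (K + 1), genBinom β k * (t - 1) ^ k| ≤ (1 - t) ^ (K + 1) / t := by
  have habs : |t - 1| = 1 - t := by rw [abs_sub_comm, abs_of_nonneg (by linarith)]
  have h := abs_one_add_rpow_sub_sum_genBinom_le (x := t - 1) (by rw [habs]; linarith) hbin
  rwa [add_sub_cancel, habs, sub_sub_cancel] at h

theorem abs_rpow_sub_sum_genBinom_mul_le {α Λ t : ℝ} (hα : 0 < α) (hΛ : 0 < Λ)
    (ht : t = 0 ∨ Λ ≤ t) (ht1 : t ≤ 1) {K : ℕ}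
    (hbin : ∀ k, K < k → |genBinom (α - 1) k| ≤ 1) :
    |t ^ α - ∑ k ∈ range (K + 1), genBinom (α - 1) k * (t * (t - 1) ^ k)|
      ≤ t * ((1 - Λ) ^ (K + 1) / Λ) := by
  obtain rfl | hΛt := ht
  · simp [Real.zero_rpow hα.ne']
  have ht0 : 0 < t := hΛ.trans_le hΛt
  have hfactor : t ^ α - ∑ k ∈ range (K + 1), genBinom (α - 1) k * (t * (t - 1) ^ k)
      = t * (t ^ (α - 1) - ∑ k ∈ range (K + 1), genBinom (α - 1) k * (t - 1) ^ k) := by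
    simp only [mul_sub, mul_sum, mul_left_comm t, Real.rpow_sub_one ht0.ne',
      mul_div_cancel₀ _ ht0.ne']
  rw [hfactor, abs_mul, abs_of_pos ht0]
  gcongr
  calc _ ≤ (1 - t) ^ (K + 1) / t := abs_rpow_sub_sum_genBinom_le ht0 ht1 hbin
    _ ≤ (1 - Λ) ^ (K + 1) / Λ := by
      have := pow_nonneg (show 0 ≤ 1 - Λ by linarith) (K + 1)
      gcongr

theorem stmt_7_general (d : ℕ) (Λ : ℝ) (hΛ : Λ ∈ Set.Ioo (0 : ℝ) 1)
    (α : ℝ) (hα : 0 < α) (β : ℝ) (hβ : β = α - 1)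
    (ρ : Matrix (Fin d) (Fin d) ℂ) (hρ : ρ.PosSemidef) (htr : ρ.trace = 1)
    (heig : ∀ j, hρ.1.eigenvalues j = 0 ∨ Λ ≤ hρ.1.eigenvalues j)
    (K : ℕ) (hbin : ∀ k : ℕ, K < k → |genBinom β k| ≤ 1) :
    |(∑ j, hρ.1.eigenvalues j ^ α) - 1 -
        ∑ k ∈ Finset.Icc 1 K, genBinom β k * ((ρ * (ρ - 1) ^ k).trace).re|
      ≤ (1 - Λ) ^ (K + 1) / Λ := by
  subst hβ
  set E := hρ.1.eigenvalues
  have hsum : ∑ j, E j = 1 := by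
    have h := congrArg Complex.re (htr ▸ hρ.1.trace_eq_sum_eigenvalues)
    simpa using h.symm
  have hle : ∀ j, E j ≤ 1 := fun j ↦
    hsum ▸ single_le_sum (fun i _ ↦ hρ.eigenvalues_nonneg i) (mem_univ j)
  have htrace : ∀ k, ((ρ * (ρ - 1) ^ k).trace).re = ∑ j, E j * (E j - 1) ^ k :=
    hρ.1.re_trace_mul_sub_one_pow
  have hconst : ∑ j, genBinom (α - 1) 0 * (E j * (E j - 1) ^ 0) = 1 := by
    simp [genBinom, hsum]
  have hsplit : (∑ j, E j ^ α) - 1 -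
        ∑ k ∈ Icc 1 K, genBinom (α - 1) k * ((ρ * (ρ - 1) ^ k).trace).re
      = ∑ j, (E j ^ α - ∑ k ∈ range (K + 1), genBinom (α - 1) k * (E j * (E j - 1) ^ k)) := by
    rw [sum_sub_distrib, sum_comm, sum_range_eq_add_Ico _ K.add_one_pos, hconst, sub_sub,
      Ico_add_one_right_eq_Icc]
    simp_rw [htrace, mul_sum]
  rw [hsplit]
  calc
    _ ≤ ∑ j, E j * ((1 - Λ) ^ (K + 1) / Λ) := by
      refine (abs_sum_le_sum_abs _ _).trans (sum_le_sum fun j _ ↦ ?_)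
      exact abs_rpow_sub_sum_genBinom_mul_le hα hΛ.1 (heig j) (hle j) hbin
    _ = (1 - Λ) ^ (K + 1) / Λ := by rw [← sum_mul, hsum, one_mul]

/-- truncated Taylor series approximation of `tr(ρ^α) = ∑_j λ_j^α`.
Real powers `λ ^ α` are `Real.rpow`, which satisfies `0 ^ α = 0` for `α ≠ 0`. -/
theorem stmt_7 (d : ℕ) (Λ : ℝ) (hΛ : Λ ∈ Set.Ioo (0 : ℝ) 1)
    (α : ℝ) (hα : 0 < α) (hα1 : α ≠ 1) (β : ℝ) (hβ : β = α - 1)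
    (ρ : Matrix (Fin d) (Fin d) ℂ) (hρ : ρ.PosSemidef) (htr : ρ.trace = 1)
    (heig : ∀ j, hρ.1.eigenvalues j = 0 ∨ Λ ≤ hρ.1.eigenvalues j)
    (K : ℕ) (hK : 1 ≤ K) (hbin : ∀ k : ℕ, K < k → |genBinom β k| ≤ 1) :
    |(∑ j, hρ.1.eigenvalues j ^ α) - 1 -
        ∑ k ∈ Finset.Icc 1 K, genBinom β k * ((ρ * (ρ - 1) ^ k).trace).re|
      ≤ (1 - Λ) ^ (K + 1) / Λ :=
  stmt_7_general d Λ hΛ α hα β hβ ρ hρ htr heig K hbin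
end

section
/- Let ρ be a d×d complex Hermitian positive semidefinite matrix with trace 1 and let t ∈ (−1,1) be real. Let S denote the swap operator on ℂ^d ⊗ ℂ^d and define cos(tρ) := (exp(i t ρ) + exp(−i t ρ))/2, where exp is the matrix exponential. Then |Re tr(ρ · cos(tρ)) − Re tr(exp(−i t S) · (ρ ⊗ ρ))| ≤ 2t², where ρ ⊗ ρ is the Kronecker product. -/
/-!
Diagonalising `ρ = ∑ λᵢ |vᵢ⟩⟨vᵢ|`, the first term is `∑ λᵢ cos (t λᵢ)`, an average with weights
`λᵢ ∈ [0, 1]` of numbers in `[1 - t² / 2, 1]`. Since `S² = 1`, `exp (-i t S) = cos t - i sin t S`,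
and `tr (S (ρ ⊗ ρ)) = tr ρ²` is real, so the second term is exactly `cos t ∈ [1 - t² / 2, 1]`.
Hence the difference is at most `t² / 2`.
-/

open Matrix Kronecker ComplexOrder

def swapOp (d : ℕ) : Matrix (Fin d × Fin d) (Fin d × Fin d) ℂ :=
  fun p q => if p.1 = q.2 ∧ p.2 = q.1 then 1 else 0

theorem NormedSpace.exp_smul_of_mul_self_eq_one {𝔸 : Type*} [NormedRing 𝔸] [NormedAlgebra ℂ 𝔸]
    [CompleteSpace 𝔸] {a : 𝔸} (ha : a * a = 1) (c : ℂ) :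
    exp (c • a) = Complex.cosh c • 1 + Complex.sinh c • a := by
  have h_even (n : ℕ) : a ^ (2 * n) = 1 := by rw [pow_mul, sq, ha, one_pow]
  rw [exp_eq_tsum ℂ]
  refine HasSum.tsum_eq (HasSum.even_add_odd ?_ ?_)
  · convert (Complex.hasSum_cosh c).smul_const (1 : 𝔸) using 2 with n
    rw [smul_pow, h_even, smul_smul, div_eq_inv_mul]
  · convert (Complex.hasSum_sinh c).smul_const a using 2 with n
    rw [smul_pow, pow_succ a, h_even, one_mul, smul_smul, div_eq_inv_mul]

namespace Matrix

variable {n : Type*} [Fintype n] [DecidableEq n]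

theorem exp_smul_of_mul_self_eq_one {A : Matrix n n ℂ} (hA : A * A = 1) (c : ℂ) :
    NormedSpace.exp (c • A) = Complex.cosh c • 1 + Complex.sinh c • A := by
  -- `exp` on matrices does not depend on a norm; any normed-algebra structure serves.
  let _ := Matrix.linftyOpNormedRing (n := n) (α := ℂ)
  let _ := Matrix.linftyOpNormedAlgebra (n := n) (R := ℂ) (α := ℂ)
  exact NormedSpace.exp_smul_of_mul_self_eq_one hA c

theorem IsHermitian.trace_mul_exp_smul {A : Matrix n n ℂ} (hA : A.IsHermitian) (c : ℂ) :
    (A * NormedSpace.exp (c • A)).trace =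
      ∑ i, (hA.eigenvalues i : ℂ) * Complex.exp (c * hA.eigenvalues i) := by
  set V : (Matrix n n ℂ)ˣ := Unitary.toUnits hA.eigenvectorUnitary
  set D : Matrix n n ℂ := diagonal (RCLike.ofReal ∘ hA.eigenvalues)
  have hA' : A = (V : Matrix n n ℂ) * D * (↑V⁻¹ : Matrix n n ℂ) := hA.spectral_theorem
  have hexp : NormedSpace.exp (c • A) =
      (V : Matrix n n ℂ) * NormedSpace.exp (c • D) * (↑V⁻¹ : Matrix n n ℂ) := by
    rw [← exp_units_conj, hA', Matrix.mul_smul, Matrix.smul_mul]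
  have hconj : A * NormedSpace.exp (c • A) =
      (V : Matrix n n ℂ) * (D * NormedSpace.exp (c • D)) * (↑V⁻¹ : Matrix n n ℂ) := by
    rw [hexp, hA']
    simp only [mul_assoc, Units.inv_mul_cancel_left]
  rw [hconj, trace_units_conj, ← diagonal_smul, exp_diagonal, diagonal_mul_diagonal,
    trace_diagonal]
  simp [Complex.exp_eq_exp_ℂ]

theorem IsHermitian.re_trace_mul_cos {A : Matrix n n ℂ} (hA : A.IsHermitian) (t : ℝ) :
    ((A * ((2⁻¹ : ℂ) • (NormedSpace.exp ((Complex.I * t) • A) +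
        NormedSpace.exp ((-(Complex.I * t)) • A)))).trace).re =
      ∑ i, hA.eigenvalues i * Real.cos (t * hA.eigenvalues i) := by
  rw [Matrix.mul_smul, Matrix.mul_add, trace_smul, trace_add, hA.trace_mul_exp_smul,
    hA.trace_mul_exp_smul, ← Finset.sum_add_distrib, Finset.smul_sum, Complex.re_sum]
  refine Finset.sum_congr rfl fun i _ => ?_
  have hcos : (2⁻¹ : ℂ) * (Complex.exp (Complex.I * t * hA.eigenvalues i) +
      Complex.exp (-(Complex.I * t) * hA.eigenvalues i)) = Real.cos (t * hA.eigenvalues i) := by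
    rw [Complex.ofReal_cos, Complex.cos]
    push_cast
    ring_nf
  rw [← mul_add, smul_eq_mul, mul_left_comm, hcos, ← Complex.ofReal_mul, Complex.ofReal_re]

theorem IsHermitian.im_trace_eq_zero {A : Matrix n n ℂ} (hA : A.IsHermitian) :
    A.trace.im = 0 := by
  simp [hA.trace_eq_sum_eigenvalues, Complex.im_sum]

end Matrix

theorem swapOp_apply (d : ℕ) (p q : Fin d × Fin d) :
    swapOp d p q = if q = p.swap then 1 else 0 := by
  simp only [swapOp, Prod.ext_iff, Prod.fst_swap, Prod.snd_swap, eq_comm, and_comm]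

theorem swapOp_mul_self (d : ℕ) : swapOp d * swapOp d = 1 := by
  ext p q
  simp only [mul_apply, swapOp_apply, ite_mul, one_mul, zero_mul, Finset.sum_ite_eq',
    Finset.mem_univ, if_true, Prod.swap_swap, one_apply, eq_comm]

theorem trace_swapOp_mul_kronecker (d : ℕ) (A B : Matrix (Fin d) (Fin d) ℂ) :
    (swapOp d * (A ⊗ₖ B)).trace = (A * B).trace := by
  simp only [trace, diag_apply, mul_apply, swapOp_apply, kroneckerMap_apply, mul_comm, mul_ite,
    mul_one, mul_zero, Finset.sum_ite_eq', Finset.mem_univ, if_true, Prod.fst_swap,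
    Prod.snd_swap, Fintype.sum_prod_type]
  exact Finset.sum_comm

theorem re_trace_exp_swapOp_mul_kronecker_self (d : ℕ) {ρ : Matrix (Fin d) (Fin d) ℂ}
    (hρ : ρ.IsHermitian) (htr : ρ.trace = 1) (t : ℝ) :
    ((NormedSpace.exp ((-(Complex.I * t)) • swapOp d) * (ρ ⊗ₖ ρ)).trace).re = Real.cos t := by
  have hsq : (ρ * ρ).trace.im = 0 := by simpa [sq] using (hρ.pow 2).im_trace_eq_zero
  rw [exp_smul_of_mul_self_eq_one (swapOp_mul_self d), Matrix.add_mul, Matrix.smul_mul,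
    Matrix.smul_mul, Matrix.one_mul, trace_add, trace_smul, trace_smul, trace_kronecker, htr,
    trace_swapOp_mul_kronecker, Complex.cosh_neg, Complex.sinh_neg, mul_comm, Complex.cosh_mul_I,
    Complex.sinh_mul_I]
  simp [hsq, ← Complex.ofReal_cos, ← Complex.ofReal_sin]

namespace Real

variable {ι : Type*} {s : Finset ι} {w : ι → ℝ}

theorem sum_mul_cos_mul_le_one (hw₀ : ∀ i ∈ s, 0 ≤ w i) (hw₁ : ∑ i ∈ s, w i = 1) (t : ℝ) :
    ∑ i ∈ s, w i * cos (t * w i) ≤ 1 :=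
  hw₁ ▸ Finset.sum_le_sum fun i hi => mul_le_of_le_one_right (hw₀ i hi) (cos_le_one _)

theorem one_sub_sq_div_two_le_sum_mul_cos_mul (hw₀ : ∀ i ∈ s, 0 ≤ w i)
    (hw₁ : ∑ i ∈ s, w i = 1) (t : ℝ) :
    1 - t ^ 2 / 2 ≤ ∑ i ∈ s, w i * cos (t * w i) := by
  calc 1 - t ^ 2 / 2 = ∑ i ∈ s, (w i - w i * (t ^ 2 / 2)) := by
        rw [Finset.sum_sub_distrib, ← Finset.sum_mul, hw₁, one_mul]
    _ ≤ ∑ i ∈ s, w i * cos (t * w i) := Finset.sum_le_sum fun i hi => ?_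
  have hwi : w i ≤ 1 := hw₁ ▸ Finset.single_le_sum hw₀ hi
  have hcos := mul_le_mul_of_nonneg_left (one_sub_sq_div_two_le_cos (x := t * w i)) (hw₀ i hi)
  have hwi2 : w i ^ 2 ≤ 1 := pow_le_one₀ (hw₀ i hi) hwi
  nlinarith [mul_nonneg (mul_nonneg (sq_nonneg t) (hw₀ i hi)) (sub_nonneg.2 hwi2)]

theorem abs_sum_mul_cos_mul_sub_cos_le (hw₀ : ∀ i ∈ s, 0 ≤ w i) (hw₁ : ∑ i ∈ s, w i = 1)
    (t : ℝ) : |∑ i ∈ s, w i * cos (t * w i) - cos t| ≤ t ^ 2 / 2 := by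
  rw [abs_sub_le_iff]
  constructor <;> linarith [sum_mul_cos_mul_le_one hw₀ hw₁ t, cos_le_one t,
    one_sub_sq_div_two_le_sum_mul_cos_mul hw₀ hw₁ t, one_sub_sq_div_two_le_cos (x := t)]

end Real

theorem stmt_8_general (d : ℕ) (ρ : Matrix (Fin d) (Fin d) ℂ) (hρ : ρ.PosSemidef)
    (htr : ρ.trace = 1) (t : ℝ) :
    |((ρ * ((2⁻¹ : ℂ) • (NormedSpace.exp ((Complex.I * t) • ρ) +
          NormedSpace.exp ((-(Complex.I * t)) • ρ)))).trace).re -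
        ((NormedSpace.exp ((-(Complex.I * t)) • swapOp d) * (ρ ⊗ₖ ρ)).trace).re|
      ≤ 2 * t ^ 2 := by
  have hH := hρ.isHermitian
  have hsum : ∑ i, hH.eigenvalues i = 1 := by
    simpa [Complex.re_sum] using congrArg Complex.re (hH.trace_eq_sum_eigenvalues.symm.trans htr)
  rw [hH.re_trace_mul_cos, re_trace_exp_swapOp_mul_kronecker_self d hH htr]
  calc _ ≤ t ^ 2 / 2 :=
        Real.abs_sum_mul_cos_mul_sub_cos_le (fun i _ => hρ.eigenvalues_nonneg i) hsum t
    _ ≤ 2 * t ^ 2 := by linarith [sq_nonneg t]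

/-- the swap-exponentiation circuit output approximates
`Re tr(ρ cos(tρ))` with error at most `2t²`, where
`cos(tρ) = (exp(itρ) + exp(−itρ))/2` uses the matrix exponential. -/
theorem stmt_8 (d : ℕ) (ρ : Matrix (Fin d) (Fin d) ℂ) (hρ : ρ.PosSemidef)
    (htr : ρ.trace = 1) (t : ℝ) (ht : t ∈ Set.Ioo (-1 : ℝ) 1) :
    |((ρ * ((2⁻¹ : ℂ) • (NormedSpace.exp ((Complex.I * t) • ρ) +
          NormedSpace.exp ((-(Complex.I * t)) • ρ)))).trace).re -
        ((NormedSpace.exp ((-(Complex.I * t)) • swapOp d) * (ρ ⊗ₖ ρ)).trace).re|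
      ≤ 2 * t ^ 2 :=
  stmt_8_general d ρ hρ htr t
end

section
/- Let t ∈ (−1,1) be real and let p_1,…,p_d ∈ [0,1] with ∑_i p_i = 1. Then ∑_{i=1}^{d} p_i · |exp(−i p_i t) − (cos t − i p_i sin t)| ≤ 2t², where |·| is the modulus of a complex number and exp is the complex exponential. -/
/-!
Writing `exp (-i q t) = cos (q t) - i sin (q t)`, each summand is the modulus of
`(cos (q t) - cos t) + i (q sin t - sin (q t))`. The real part is at most `t² / 2` since both
cosines lie in `[1 - t² / 2, 1]`; the imaginary part is `q (sin t - t) + (q t - sin (q t))`,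
at most `|t|³ / 3` by the cubic Taylor bound for `sin`. For `|t| ≤ 1` every summand is thus
at most `2 t²`, and the weights `pᵢ` sum to one.
-/

open Complex

namespace Real

theorem abs_cos_mul_sub_cos_le {q : ℝ} (hq : |q| ≤ 1) (t : ℝ) :
    |cos (q * t) - cos t| ≤ t ^ 2 / 2 := by
  have hqt : (q * t) ^ 2 ≤ t ^ 2 := by
    rw [mul_pow]
    exact mul_le_of_le_one_left (sq_nonneg t) (sq_le_one_iff_abs_le_one q |>.2 hq)
  have := one_sub_sq_div_two_le_cos (x := q * t)
  have := one_sub_sq_div_two_le_cos (x := t)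
  have := cos_le_one (q * t)
  have := cos_le_one t
  rw [abs_le]
  constructor <;> linarith

theorem abs_mul_sin_sub_sin_mul_le {q : ℝ} (hq : |q| ≤ 1) (t : ℝ) :
    |q * sin t - sin (q * t)| ≤ |t| ^ 3 / 3 := by
  have hq3 : |q| ^ 3 ≤ 1 := pow_le_one₀ (abs_nonneg q) hq
  calc |q * sin t - sin (q * t)| = |(q * t - sin (q * t)) - q * (t - sin t)| := by ring_nf
    _ ≤ |q * t - sin (q * t)| + |q| * |t - sin t| := by
        rw [← abs_mul]; exact abs_sub _ _
    _ ≤ |q * t| ^ 3 / 6 + 1 * (|t| ^ 3 / 6) := by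
        gcongr
        exacts [abs_sub_sin_le _, abs_sub_sin_le _]
    _ = |q| ^ 3 * (|t| ^ 3 / 6) + |t| ^ 3 / 6 := by rw [abs_mul]; ring
    _ ≤ 1 * (|t| ^ 3 / 6) + |t| ^ 3 / 6 := by gcongr
    _ = |t| ^ 3 / 3 := by ring

end Real

theorem Complex.exp_neg_I_mul_sub_eq (q t : ℝ) :
    exp (-(I * q * t)) - (Real.cos t - I * q * Real.sin t) =
      ⟨Real.cos (q * t) - Real.cos t, q * Real.sin t - Real.sin (q * t)⟩ := by
  have : -(I * q * t) = ((-(q * t) : ℝ) : ℂ) * I := by push_cast; ring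
  rw [this, exp_mul_I, ← ofReal_cos, ← ofReal_sin, Real.cos_neg, Real.sin_neg]
  apply Complex.ext
  · simp [-ofReal_cos, -ofReal_sin]
  · simp [-ofReal_cos, -ofReal_sin]; ring

theorem Complex.norm_exp_neg_I_mul_sub_le {q : ℝ} (hq : |q| ≤ 1) (t : ℝ) :
    ‖exp (-(I * q * t)) - (Real.cos t - I * q * Real.sin t)‖ ≤ t ^ 2 / 2 + |t| ^ 3 / 3 := by
  rw [exp_neg_I_mul_sub_eq]
  refine (norm_le_abs_re_add_abs_im _).trans ?_
  exact add_le_add (Real.abs_cos_mul_sub_cos_le hq t) (Real.abs_mul_sin_sub_sin_mul_le hq t)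

/-- eigenvalue-wise bound
`∑ᵢ pᵢ |e^{−i pᵢ t} − (cos t − i pᵢ sin t)| ≤ 2t²`. -/
theorem stmt_9 (d : ℕ) (t : ℝ) (ht : t ∈ Set.Ioo (-1 : ℝ) 1)
    (p : Fin d → ℝ) (hp : ∀ i, p i ∈ Set.Icc (0 : ℝ) 1) (hsum : ∑ i, p i = 1) :
    ∑ i, p i * ‖Complex.exp (-(Complex.I * (p i) * t)) -
        ((Real.cos t : ℂ) - Complex.I * (p i) * (Real.sin t : ℂ))‖
      ≤ 2 * t ^ 2 := by
  have habs : |t| ≤ 1 := abs_le.2 ⟨ht.1.le, ht.2.le⟩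
  have hcube : |t| ^ 3 ≤ t ^ 2 := by
    rw [← sq_abs t, pow_succ]
    exact mul_le_of_le_one_right (by positivity) habs
  have hterm : ∀ i, ‖Complex.exp (-(Complex.I * (p i) * t)) -
      ((Real.cos t : ℂ) - Complex.I * (p i) * (Real.sin t : ℂ))‖ ≤ 2 * t ^ 2 := fun i ↦ by
    have hpi : |p i| ≤ 1 := abs_le.2 ⟨by linarith [(hp i).1], (hp i).2⟩
    have := Complex.norm_exp_neg_I_mul_sub_le hpi t
    linarith [sq_nonneg t]
  calc _ ≤ ∑ i, p i * (2 * t ^ 2) :=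
        Finset.sum_le_sum fun i _ ↦ mul_le_mul_of_nonneg_left (hterm i) (hp i).1
    _ = 2 * t ^ 2 := by rw [← Finset.sum_mul, hsum, one_mul]
end

section
/- Let P be an n×n complex orthogonal projection (P* = P and P·P = P) and let W be an n×n unitary matrix (W*·W = W·W* = I). Define A = −W·(I − 2P)·W*·(I − 2P)·W. Then P·A·P = 3·(P·W·P) − 4·(P·W·P)·W*·(P·W·P). -/
open Matrix

/-- for a projection `P` and unitary `W`, with
`A = −W(I − 2P)W*(I − 2P)W`, one has `P·A·P = 3·PWP − 4·(PWP)·W*·(PWP)`. -/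
theorem stmt_13 (n : ℕ) (P W : Matrix (Fin n) (Fin n) ℂ)
    (hP : Pᴴ = P ∧ P * P = P)
    (hW : Wᴴ * W = 1 ∧ W * Wᴴ = 1) :
    P * (-(W * (1 - (2 : ℂ) • P) * Wᴴ * (1 - (2 : ℂ) • P) * W)) * P =
      (3 : ℂ) • (P * W * P) - (4 : ℂ) • ((P * W * P) * Wᴴ * (P * W * P)) := by
  obtain ⟨hP1, hP2⟩ := hP
  obtain ⟨hW1, hW2⟩ := hW
  have e1 : ∀ M : Matrix (Fin n) (Fin n) ℂ, W * (Wᴴ * M) = M := fun M => by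
    rw [← mul_assoc, hW2, one_mul]
  have e2 : ∀ M : Matrix (Fin n) (Fin n) ℂ, Wᴴ * (W * M) = M := fun M => by
    rw [← mul_assoc, hW1, one_mul]
  have e3 : ∀ M : Matrix (Fin n) (Fin n) ℂ, P * (P * M) = P * M := fun M => by
    rw [← mul_assoc, hP2]
  simp only [mul_sub, sub_mul, mul_one, one_mul, smul_mul_assoc, mul_smul_comm, mul_assoc,
    neg_mul, mul_neg, neg_sub, e1, e2, e3, hP2, hW1, hW2, smul_smul, smul_sub, sub_smul]
  module
end

section
/- Let p_1,…,p_d ∈ [0,1] with ∑_i p_i = 1, and let α be real with α ∈ (0,1) ∪ (2,∞). Then ∑_{i=1}^{d} p_i^α ≥ (∑_{i=1}^{d} p_i²)^{α−1}, where real powers are used with the convention 0^α = 0 (note ∑_i p_i² ∈ (0,1]). -/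
/-!
Apply Jensen's inequality to `x ↦ x ^ (α - 1)` with weights `pᵢ` at the points `pᵢ`:
`(∑ pᵢ · pᵢ) ^ (α - 1) ≤ ∑ pᵢ · pᵢ ^ (α - 1) = ∑ pᵢ ^ α`. The function is convex on `(0, ∞)`
because its second derivative `(α - 1)(α - 2) x ^ (α - 3)` is nonnegative exactly when
`α ∉ (1, 2)`.
-/

open Finset Set

theorem convexOn_rpow_Ioi {q : ℝ} (hq : 0 ≤ q * (q - 1)) :
    ConvexOn ℝ (Ioi 0) fun x : ℝ ↦ x ^ q := by
  have hdiff (r : ℝ) : DifferentiableOn ℝ (fun x : ℝ ↦ x ^ r) (Ioi 0) := fun x hx ↦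
    (Real.differentiableAt_rpow_const_of_ne r (ne_of_gt hx)).differentiableWithinAt
  refine convexOn_of_deriv2_nonneg' (convex_Ioi 0) (hdiff q) ?_ fun x hx ↦ ?_
  · rw [Real.deriv_rpow_const']
    exact (hdiff (q - 1)).const_mul q
  · have h2 : (descPochhammer ℝ 2).eval q = q * (q - 1) := by simp [descPochhammer_succ_right]
    rw [Real.iter_deriv_rpow_const, h2]
    exact mul_nonneg hq (Real.rpow_nonneg (le_of_lt hx) _)

theorem sum_sq_rpow_le_sum_rpow_mul {ι : Type*} {s : Finset ι} {w : ι → ℝ}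
    (hw₀ : ∀ i ∈ s, 0 ≤ w i) (hw₁ : ∑ i ∈ s, w i = 1) {q : ℝ} (hq : 0 ≤ q * (q - 1)) :
    (∑ i ∈ s, w i ^ 2) ^ q ≤ ∑ i ∈ s, w i ^ q * w i := by
  -- Jensen is applied on the support of `w`, since `x ^ q` is convex only on `(0, ∞)`.
  have hsupp {f : ι → ℝ} (hf : ∀ i, f i ≠ 0 → w i ≠ 0) :
      ∑ i ∈ s with 0 < w i, f i = ∑ i ∈ s, f i :=
    sum_filter_of_ne fun i hi hfi ↦ lt_of_le_of_ne (hw₀ i hi) (hf i hfi).symm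
  have jensen := (convexOn_rpow_Ioi hq).map_sum_le (t := {i ∈ s | 0 < w i}) (w := w) (p := w)
    (fun i hi ↦ le_of_lt (mem_filter.1 hi).2) (by rw [hsupp fun i ↦ id, hw₁])
    (fun i hi ↦ (mem_filter.1 hi).2)
  simp only [smul_eq_mul] at jensen
  rw [hsupp fun i h ↦ left_ne_zero_of_mul h, hsupp fun i h ↦ left_ne_zero_of_mul h] at jensen
  simpa only [sq, mul_comm (w _ ^ q)] using jensen

/-- for a probability vector `p` and `α ∈ (0,1) ∪ (2,∞)`,
`∑ pᵢ^α ≥ (∑ pᵢ²)^{α−1}` (real powers, `0^α = 0`). -/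
theorem stmt_17 (d : ℕ) (p : Fin d → ℝ) (hp : ∀ i, p i ∈ Set.Icc (0 : ℝ) 1)
    (hsum : ∑ i, p i = 1) (α : ℝ) (hα : α ∈ Set.Ioo (0 : ℝ) 1 ∪ Set.Ioi (2 : ℝ)) :
    (∑ i, (p i) ^ (2 : ℝ)) ^ (α - 1) ≤ ∑ i, (p i) ^ α := by
  obtain ⟨hq, hα₀⟩ : 0 ≤ (α - 1) * (α - 1 - 1) ∧ α - 1 + 1 ≠ 0 := by
    rcases hα with ⟨h₀, h₁⟩ | h₂
    · exact ⟨by nlinarith, by linarith⟩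
    · have h₂ : 2 < α := h₂
      exact ⟨by nlinarith, by linarith⟩
  calc (∑ i, p i ^ (2 : ℝ)) ^ (α - 1) = (∑ i, p i ^ 2) ^ (α - 1) := by simp only [Real.rpow_two]
    _ ≤ ∑ i, p i ^ (α - 1) * p i := sum_sq_rpow_le_sum_rpow_mul (fun i _ ↦ (hp i).1) hsum hq
    _ = ∑ i, p i ^ α := by
      refine sum_congr rfl fun i _ ↦ ?_
      rw [← Real.rpow_add_one' (hp i).1 hα₀, sub_add_cancel]
end
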